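/- Let X and Y be simple graphs, each on n vertices. Then the number of edges of the friends-and-strangers graph FS(X,Y) equals |E(X)| · |E(Y)| · (n−2)!. -/

import Mathlib

open SimpleGraph

/-- Adjacency in the friends-and-strangers graph: bijections `σ` and `τ` are adjacent iff there
is an edge `{a, b}` of `X` such that `{σ a, σ b}` is an edge of `Y`, `σ a = τ b`, `σ b = τ a`,
and `σ c = τ c` for every vertex `c` other than `a` and `b`. -/
def fsAdj {α β : Type*} (X : SimpleGraph α) (Y : SimpleGraph β) (σ τ : α ≃ β) : Prop :=
  ∃ a b : α, X.Adj a b ∧ Y.Adj (σ a) (σ b) ∧ σ a = τ b ∧ σ b = τ a ∧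
    ∀ c : α, c ≠ a → c ≠ b → σ c = τ c

/-- The friends-and-strangers graph `FS(X, Y)` of two simple graphs on the same number of
vertices; its vertices are bijections from `V(X)` to `V(Y)`. -/
def FS {α β : Type*} (X : SimpleGraph α) (Y : SimpleGraph β) : SimpleGraph (α ≃ β) where
  Adj := fsAdj X Y
  symm := by
    refine ⟨?_⟩
    rintro σ τ ⟨a, b, hX, hY, h1, h2, h3⟩
    refine ⟨a, b, hX, ?_, h2.symm, h1.symm, fun c hca hcb => (h3 c hca hcb).symm⟩
    rw [← h2, ← h1]
    exact hY.symm
  loopless := by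
    refine ⟨?_⟩
    rintro σ ⟨a, b, hX, hY, h1, _, _⟩
    exact hX.ne (σ.injective h1)


/-!
Count the darts (ordered adjacent pairs) of `FS X Y`. A dart leaving `σ` goes to `σ ∘ (a b)` for an
edge `{a, b}` of `X` that `σ` maps onto an edge of `Y`, and distinct edges give distinct
transpositions. For a fixed edge `{a, b}`, such `σ` are counted by first choosing the dart
`(σ a, σ b)` of `Y` (`2 |E(Y)|` ways) and then a bijection between the remaining `n - 2` vertices
on both sides (`(n - 2)!` ways). Hence `2 |E(FS X Y)| = |E(X)| * 2 |E(Y)| * (n - 2)!`.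
-/

open Equiv Nat

theorem Set.nat_card_compl_singleton {α : Type*} [Finite α] (a : α) :
    Nat.card ({a}ᶜ : Set α) = Nat.card α - 1 := by
  rw [Nat.card_coe_set_eq, Set.ncard_compl, Set.ncard_singleton]

namespace Equiv

variable {α β : Type*}

theorem nat_card_equiv_of_card_eq [Finite α] [Finite β] (h : Nat.card α = Nat.card β) :
    Nat.card (α ≃ β) = (Nat.card α)! := by
  obtain ⟨e⟩ := Finite.card_eq.mp h
  rw [Nat.card_congr (equivCongr (Equiv.refl α) e.symm), Nat.card_perm]

def restrictSingletonCompl [DecidableEq α] [DecidableEq β] (a : α) (b : β) :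
    {σ : α ≃ β // σ a = b} ≃ (({a}ᶜ : Set α) ≃ ({b}ᶜ : Set β)) :=
  (subtypeEquivRight fun _ => ⟨by rintro h ⟨_, rfl⟩; exact h, fun h => h ⟨a, rfl⟩⟩).trans
    (Equiv.Set.compl (ofUnique _ _))

@[simp]
theorem restrictSingletonCompl_apply_coe [DecidableEq α] [DecidableEq β] {a : α} {b : β}
    (σ : {σ : α ≃ β // σ a = b}) (x : ({a}ᶜ : Set α)) :
    (restrictSingletonCompl a b σ x : β) = σ.1 x := rfl

variable [Finite α] [Finite β]

theorem nat_card_apply_eq (h : Nat.card α = Nat.card β) (a : α) (b : β) :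
    Nat.card {σ : α ≃ β // σ a = b} = (Nat.card α - 1)! := by
  classical
  have hcompl : Nat.card ({a}ᶜ : Set α) = Nat.card ({b}ᶜ : Set β) := by
    rw [Set.nat_card_compl_singleton, Set.nat_card_compl_singleton, h]
  rw [Nat.card_congr (restrictSingletonCompl a b), nat_card_equiv_of_card_eq hcompl,
    Set.nat_card_compl_singleton]

theorem nat_card_apply_eq_and_apply_eq (h : Nat.card α = Nat.card β) {a₁ a₂ : α} (ha : a₁ ≠ a₂)
    {b₁ b₂ : β} (hb : b₁ ≠ b₂) :
    Nat.card {σ : α ≃ β // σ a₁ = b₁ ∧ σ a₂ = b₂} = (Nat.card α - 2)! := by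
  classical
  have e : {σ : α ≃ β // σ a₁ = b₁ ∧ σ a₂ = b₂} ≃
      {τ : ({a₁}ᶜ : Set α) ≃ ({b₁}ᶜ : Set β) // τ ⟨a₂, ha.symm⟩ = ⟨b₂, hb.symm⟩} :=
    (subtypeSubtypeEquivSubtypeInter _ (fun σ => σ a₂ = b₂)).symm.trans
      (subtypeEquiv (restrictSingletonCompl a₁ b₁) fun σ => by simp [Subtype.ext_iff])
  have hcompl : Nat.card ({a₁}ᶜ : Set α) = Nat.card ({b₁}ᶜ : Set β) := by
    rw [Set.nat_card_compl_singleton, Set.nat_card_compl_singleton, h]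
  rw [Nat.card_congr e, nat_card_apply_eq hcompl, Set.nat_card_compl_singleton, Nat.sub_sub]

end Equiv

namespace Sym2

variable {α : Type*} [DecidableEq α]

def swapPerm : Sym2 α → Perm α :=
  Sym2.lift ⟨swap, swap_comm⟩

@[simp]
theorem swapPerm_mk (a b : α) : s(a, b).swapPerm = swap a b := rfl

theorem swapPerm_injOn : Set.InjOn swapPerm {e : Sym2 α | ¬e.IsDiag} := by
  intro e he e' _ h
  induction e using Sym2.ind with | _ a b => ?_
  induction e' using Sym2.ind with | _ c d => ?_
  have hab : a ≠ b := by simpa using he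
  have hb : swap c d a = b := by rw [← swapPerm_mk, ← h, swapPerm_mk, swap_apply_left]
  have hacd : a = c ∨ a = d := by
    by_contra! hne
    exact hab (by rwa [swap_apply_of_ne_of_ne hne.1 hne.2] at hb)
  rcases hacd with rfl | rfl
  · rw [← hb, swap_apply_left]
  · rw [← hb, swap_apply_right, Sym2.eq_swap]

end Sym2

namespace SimpleGraph

theorem nat_card_dart_eq_two_mul_ncard_edgeSet {V : Type*} [Finite V] (G : SimpleGraph V) :
    Nat.card G.Dart = 2 * G.edgeSet.ncard := by
  classical
  have := Fintype.ofFinite V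
  rw [Nat.card_eq_fintype_card, dart_card_eq_twice_card_edges, Set.ncard_eq_toFinset_card',
    edgeFinset]

theorem nat_card_equiv_adj_apply_apply {α β : Type*} [Finite α] [Finite β] (Y : SimpleGraph β)
    (h : Nat.card α = Nat.card β) {a b : α} (hab : a ≠ b) :
    Nat.card {σ : α ≃ β // Y.Adj (σ a) (σ b)} = Nat.card Y.Dart * (Nat.card α - 2)! := by
  classical
  have := Fintype.ofFinite β
  let e : {σ : α ≃ β // Y.Adj (σ a) (σ b)} ≃
      Σ d : Y.Dart, {σ : α ≃ β // σ a = d.fst ∧ σ b = d.snd} :=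
    { toFun σ := ⟨⟨(σ.1 a, σ.1 b), σ.2⟩, σ.1, rfl, rfl⟩
      invFun p := ⟨p.2.1, by rw [p.2.2.1, p.2.2.2]; exact p.1.adj⟩
      left_inv _ := rfl
      right_inv := by
        rintro ⟨⟨⟨_, _⟩, _⟩, σ, h₁, h₂⟩
        dsimp only at h₁ h₂
        subst h₁ h₂
        rfl }
  rw [Nat.card_congr e, Nat.card_sigma]
  simp only [fun d : Y.Dart => nat_card_apply_eq_and_apply_eq h hab d.adj.ne, Finset.sum_const,
    Finset.card_univ, smul_eq_mul, Nat.card_eq_fintype_card]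

end SimpleGraph

section FS

variable {α β : Type*} (X : SimpleGraph α) (Y : SimpleGraph β)

theorem fs_adj_iff [DecidableEq α] {σ τ : α ≃ β} :
    (FS X Y).Adj σ τ ↔ ∃ a b, X.Adj a b ∧ Y.Adj (σ a) (σ b) ∧ τ = (swap a b).trans σ := by
  constructor
  · rintro ⟨a, b, hX, hY, hab, hba, hrest⟩
    refine ⟨a, b, hX, hY, Equiv.ext fun x => ?_⟩
    rcases eq_or_ne x a with rfl | hxa
    · simp [hba]
    rcases eq_or_ne x b with rfl | hxb
    · simp [hab]
    simp [swap_apply_of_ne_of_ne hxa hxb, hrest x hxa hxb]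
  · rintro ⟨a, b, hX, hY, rfl⟩
    refine ⟨a, b, hX, hY, by simp, by simp, fun c hca hcb => ?_⟩
    simp [swap_apply_of_ne_of_ne hca hcb]

theorem fs_adj_swapPerm_trans [DecidableEq α] {e : Sym2 α} (he : e ∈ X.edgeSet) {σ : α ≃ β}
    (hσ : e.map σ ∈ Y.edgeSet) : (FS X Y).Adj σ (e.swapPerm.trans σ) := by
  induction e using Sym2.ind with | _ a b => ?_
  exact (fs_adj_iff X Y).mpr ⟨a, b, he, hσ, rfl⟩

noncomputable def fsDartEquiv [DecidableEq α] :
    (Σ e : X.edgeSet, {σ : α ≃ β // e.1.map σ ∈ Y.edgeSet}) ≃ (FS X Y).Dart :=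
  Equiv.ofBijective (fun p => ⟨(p.2.1, p.1.1.swapPerm.trans p.2.1),
    fs_adj_swapPerm_trans X Y p.1.2 p.2.2⟩) <| by
    constructor
    · rintro ⟨e, σ, hσ⟩ ⟨e', σ', hσ'⟩ h
      simp only [Dart.ext_iff, Prod.mk.injEq] at h
      obtain ⟨rfl, h⟩ := h
      refine Sigma.subtype_ext (Subtype.ext <| Sym2.swapPerm_injOn (X.not_isDiag_of_mem_edgeSet e.2)
        (X.not_isDiag_of_mem_edgeSet e'.2) ?_) rfl
      exact Equiv.ext fun x => σ.injective (congrArg (· x) h)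
    · rintro ⟨⟨σ, τ⟩, hστ : (FS X Y).Adj σ τ⟩
      obtain ⟨a, b, hX, hY, rfl⟩ := (fs_adj_iff X Y).mp hστ
      exact ⟨⟨⟨s(a, b), hX⟩, σ, hY⟩, rfl⟩

end FS

theorem ncard_edgeSet_fs {α β : Type*} [Finite α] [Finite β] (X : SimpleGraph α)
    (Y : SimpleGraph β) (h : Nat.card α = Nat.card β) :
    (FS X Y).edgeSet.ncard = X.edgeSet.ncard * Y.edgeSet.ncard * (Nat.card α - 2)! := by
  classical
  have hfiber (e : X.edgeSet) :
      Nat.card {σ : α ≃ β // e.1.map σ ∈ Y.edgeSet} = Nat.card Y.Dart * (Nat.card α - 2)! := by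
    obtain ⟨e, he⟩ := e
    induction e using Sym2.ind with | _ a b => ?_
    simpa only [Sym2.map_mk, mem_edgeSet] using nat_card_equiv_adj_apply_apply Y h he.ne
  have := Fintype.ofFinite X.edgeSet
  have hdarts : Nat.card (FS X Y).Dart =
      X.edgeSet.ncard * (Nat.card Y.Dart * (Nat.card α - 2)!) := by
    rw [← Nat.card_congr (fsDartEquiv X Y), Nat.card_sigma]
    simp only [hfiber, Finset.sum_const, Finset.card_univ, smul_eq_mul, ← Nat.card_eq_fintype_card,
      Nat.card_coe_set_eq]
  rw [nat_card_dart_eq_two_mul_ncard_edgeSet, nat_card_dart_eq_two_mul_ncard_edgeSet] at hdarts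
  apply Nat.eq_of_mul_eq_mul_left two_pos
  rw [hdarts]
  ring

theorem fs_edge_count_general (n : ℕ) (X Y : SimpleGraph (Fin n)) :
    (FS X Y).edgeSet.ncard =
      X.edgeSet.ncard * Y.edgeSet.ncard * Nat.factorial (n - 2) := by
  simpa using ncard_edgeSet_fs X Y rfl

/-- For `n`-vertex graphs `X` and `Y`, the number of edges of `FS(X, Y)`
equals `|E(X)| * |E(Y)| * (n - 2)!`. -/
theorem fs_edge_count (n : ℕ) (hn : 2 ≤ n) (X Y : SimpleGraph (Fin n)) :
    (FS X Y).edgeSet.ncard =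
      X.edgeSet.ncard * Y.edgeSet.ncard * Nat.factorial (n - 2) :=
  fs_edge_count_general n X Y
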